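/- For the tractional constraint of Example 4.1: if t, x, y : ℝ → ℝ are differentiable, satisfy (x − t)² + y² = 1 and y'·(x − t) = x'·(y − 1) everywhere, then the differential consequence (x')²·y − (x')² + (y')²·y + (y')² = 0 holds at every point where y ≠ 1. -/

import Mathlib

/-! The constraint is algebraic at each point: multiplying the claimed identity by `y - 1` turns
`(x')² (y - 1)²` into `(y')² (x - t)²` via the tangency relation, and the circle constraint
`(x - t)² = 1 - y²` then makes the product vanish; `y ≠ 1` lets one cancel the factor. -/

theorem sq_mul_sub_sq_add_sq_mul_add_sq_eq_zero {R : Type*} [CommRing R] [NoZeroDivisors R]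
    {a b p q : R} (hcircle : a ^ 2 + b ^ 2 = 1) (htangent : q * a = p * (b - 1)) (hb : b ≠ 1) :
    p ^ 2 * b - p ^ 2 + q ^ 2 * b + q ^ 2 = 0 := by
  have hsq : (q * a) ^ 2 = (p * (b - 1)) ^ 2 := by rw [htangent]
  have hprod : (p ^ 2 * b - p ^ 2 + q ^ 2 * b + q ^ 2) * (b - 1) = 0 := by
    linear_combination q ^ 2 * hcircle - hsq
  exact (mul_eq_zero.mp hprod).resolve_right (sub_ne_zero.mpr hb)

theorem tractional_consequence_general (t x y : ℝ → ℝ)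
    (h1 : ∀ s, (x s - t s) ^ 2 + (y s) ^ 2 = 1)
    (h2 : ∀ s, deriv y s * (x s - t s) = deriv x s * (y s - 1)) :
    ∀ s, y s ≠ 1 →
      (deriv x s) ^ 2 * y s - (deriv x s) ^ 2 + (deriv y s) ^ 2 * y s + (deriv y s) ^ 2 = 0 :=
  fun s hs => sq_mul_sub_sq_add_sq_mul_add_sq_eq_zero (h1 s) (h2 s) hs

theorem tractional_consequence (t x y : ℝ → ℝ)
    (ht : Differentiable ℝ t) (hx : Differentiable ℝ x) (hy : Differentiable ℝ y)
    (h1 : ∀ s, (x s - t s) ^ 2 + (y s) ^ 2 = 1)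
    (h2 : ∀ s, deriv y s * (x s - t s) = deriv x s * (y s - 1)) :
    ∀ s, y s ≠ 1 →
      (deriv x s) ^ 2 * y s - (deriv x s) ^ 2 + (deriv y s) ^ 2 * y s + (deriv y s) ^ 2 = 0 :=
  tractional_consequence_general t x y h1 h2
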